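/- (Theorem 3) Let h^μ be a genvector field, Ψ₁, Ψ₂, Ψ₃ : ℝ^{1,3} → ℂ⊗Cl smooth fields with Ψ_l = Ψ_lχ, A_μ a smooth L(χ)-valued field, C_μ a smooth L₃-valued field, and B̲_μ a smooth field of anti-Hermitian complex 3×3 matrices ‖b^k_{lμ}‖. Set J^μ_{kl} = Ψ_k† iβ h^μ Ψ_l, J^μ_{(A)} = (1/3)(J^μ_{11} + J^μ_{22} + J^μ_{33}), J̲^μ_{(B)} = the complex 3×3 matrix whose (k,l) entry is the coefficient of e in π⁰(J^μ_{kl}), and J^μ_{(C)} = θβh^μ − π⁴(θβh^μ). If ∂_μ J^μ_{(A)} − [A_μ, J^μ_{(A)}] = 0, ∂_μ J̲^μ_{(B)} − [B̲_μ, J̲^μ_{(B)}] = 0, and ∂_μ J^μ_{(C)} − [C_μ, J^μ_{(C)}] = 0, then both (∂_μ J^μ_{(A)} − [A_μ, J^μ_{(A)}]) + (1/3)Σ_{l=1}^{3} Ψ_l† iθ (∂_μ(θβh^μ) − [C_μ, θβh^μ]) Ψ_l = 0 and, entrywise in (k,l), (∂_μ J̲^μ_{(B)} − [B̲_μ, J̲^μ_{(B)}])_{kl}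 + π̇⁰(Ψ_k† iθ (∂_μ(θβh^μ) − [C_μ, θβh^μ]) Ψ_l) = 0 hold, where π̇⁰(U) is the coefficient of e in π⁰(U). -/

import Mathlib

noncomputable section
open CliffordAlgebra TensorProduct
def ηd : Fin 4 → ℝ := ![1, -1, -1, -1]
def Qm : QuadraticForm ℝ (Fin 4 → ℝ) := QuadraticMap.weightedSumSquares ℝ ηd
abbrev Cl := CliffordAlgebra Qm
def γ (a : Fin 4) : Cl := ι Qm (Pi.single a 1)

lemma Qm_single (a : Fin 4) : Qm (Pi.single a 1) = ηd a := by
  simp [Qm, QuadraticMap.weightedSumSquares_apply, Pi.single_apply]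

lemma gsq (a : Fin 4) : γ a * γ a = algebraMap ℝ Cl (ηd a) := by
  rw [γ, ι_sq_scalar, Qm_single]

lemma gortho {a b : Fin 4} (h : a ≠ b) : Qm.IsOrtho (Pi.single a 1) (Pi.single b 1) := by
  rw [QuadraticMap.isOrtho_def]
  simp only [Qm, QuadraticMap.weightedSumSquares_apply, Pi.add_apply, Pi.single_apply]
  rw [← Finset.sum_add_distrib]
  apply Finset.sum_congr rfl
  intro i _
  rcases eq_or_ne a i with rfl | ha
  · simp [h]
  · rcases eq_or_ne b i with rfl | hb
    · simp [h.symm]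
    · simp [Ne.symm ha, Ne.symm hb]

lemma gswap {a b : Fin 4} (h : a ≠ b) : γ a * γ b = -(γ b * γ a) :=
  ι_mul_ι_comm_of_isOrtho (gortho h)

lemma gswap' {a b : Fin 4} (h : a ≠ b) (x : Cl) : γ a * (γ b * x) = -(γ b * (γ a * x)) := by
  rw [← mul_assoc, gswap h, neg_mul, mul_assoc]

lemma gsq0 : γ 0 * γ 0 = 1 := by rw [gsq]; norm_num [ηd]
lemma gsq1 : γ 1 * γ 1 = -1 := by rw [gsq]; norm_num [ηd]
lemma gsq2 : γ 2 * γ 2 = -1 := by rw [gsq, show ηd 2 = -1 from rfl]; simp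
lemma gsq3 : γ 3 * γ 3 = -1 := by rw [gsq, show ηd 3 = -1 from rfl]; simp
lemma gsq0' (x : Cl) : γ 0 * (γ 0 * x) = x := by rw [← mul_assoc, gsq0, one_mul]
lemma gsq1' (x : Cl) : γ 1 * (γ 1 * x) = -x := by rw [← mul_assoc, gsq1]; simp
lemma gsq2' (x : Cl) : γ 2 * (γ 2 * x) = -x := by rw [← mul_assoc, gsq2]; simp
lemma gsq3' (x : Cl) : γ 3 * (γ 3 * x) = -x := by rw [← mul_assoc, gsq3]; simp

lemma h10 : (1 : Fin 4) ≠ 0 := by decide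
lemma h20 : (2 : Fin 4) ≠ 0 := by decide
lemma h30 : (3 : Fin 4) ≠ 0 := by decide
lemma h21 : (2 : Fin 4) ≠ 1 := by decide
lemma h31 : (3 : Fin 4) ≠ 1 := by decide
lemma h32 : (3 : Fin 4) ≠ 2 := by decide

def bladeSet : Set Cl :=
  {1, γ 0, γ 1, γ 2, γ 3, γ 0 * γ 1, γ 0 * γ 2, γ 0 * γ 3, γ 1 * γ 2, γ 1 * γ 3, γ 2 * γ 3,
    γ 0 * (γ 1 * γ 2), γ 0 * (γ 1 * γ 3), γ 0 * (γ 2 * γ 3), γ 1 * (γ 2 * γ 3),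
    γ 0 * (γ 1 * (γ 2 * γ 3))}

def Psp : Submodule ℝ Cl := Submodule.span ℝ bladeSet
lemma pos0 : (1 : Cl) ∈ bladeSet := Set.mem_insert _ _
lemma pos1 : (γ 0 : Cl) ∈ bladeSet := Set.mem_insert_of_mem _ (Set.mem_insert _ _)
lemma pos2 : (γ 1 : Cl) ∈ bladeSet := Set.mem_insert_of_mem _ (Set.mem_insert_of_mem _ (Set.mem_insert _ _))
lemma pos3 : (γ 2 : Cl) ∈ bladeSet := Set.mem_insert_of_mem _ (Set.mem_insert_of_mem _ (Set.mem_insert_of_mem _ (Set.mem_insert _ _)))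
lemma pos4 : (γ 3 : Cl) ∈ bladeSet := Set.mem_insert_of_mem _ (Set.mem_insert_of_mem _ (Set.mem_insert_of_mem _ (Set.mem_insert_of_mem _ (Set.mem_insert _ _))))
lemma pos5 : (γ 0 * γ 1 : Cl) ∈ bladeSet := Set.mem_insert_of_mem _ (Set.mem_insert_of_mem _ (Set.mem_insert_of_mem _ (Set.mem_insert_of_mem _ (Set.mem_insert_of_mem _ (Set.mem_insert _ _)))))
lemma pos6 : (γ 0 * γ 2 : Cl) ∈ bladeSet := Set.mem_insert_of_mem _ (Set.mem_insert_of_mem _ (Set.mem_insert_of_mem _ (Set.mem_insert_of_mem _ (Set.mem_insert_of_mem _ (Set.mem_insert_of_mem _ (Set.mem_insert _ _))))))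
lemma pos7 : (γ 0 * γ 3 : Cl) ∈ bladeSet := Set.mem_insert_of_mem _ (Set.mem_insert_of_mem _ (Set.mem_insert_of_mem _ (Set.mem_insert_of_mem _ (Set.mem_insert_of_mem _ (Set.mem_insert_of_mem _ (Set.mem_insert_of_mem _ (Set.mem_insert _ _)))))))
lemma pos8 : (γ 1 * γ 2 : Cl) ∈ bladeSet := Set.mem_insert_of_mem _ (Set.mem_insert_of_mem _ (Set.mem_insert_of_mem _ (Set.mem_insert_of_mem _ (Set.mem_insert_of_mem _ (Set.mem_insert_of_mem _ (Set.mem_insert_of_mem _ (Set.mem_insert_of_mem _ (Set.mem_insert _ _))))))))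
lemma pos9 : (γ 1 * γ 3 : Cl) ∈ bladeSet := Set.mem_insert_of_mem _ (Set.mem_insert_of_mem _ (Set.mem_insert_of_mem _ (Set.mem_insert_of_mem _ (Set.mem_insert_of_mem _ (Set.mem_insert_of_mem _ (Set.mem_insert_of_mem _ (Set.mem_insert_of_mem _ (Set.mem_insert_of_mem _ (Set.mem_insert _ _)))))))))
lemma pos10 : (γ 2 * γ 3 : Cl) ∈ bladeSet := Set.mem_insert_of_mem _ (Set.mem_insert_of_mem _ (Set.mem_insert_of_mem _ (Set.mem_insert_of_mem _ (Set.mem_insert_of_mem _ (Set.mem_insert_of_mem _ (Set.mem_insert_of_mem _ (Set.mem_insert_of_mem _ (Set.mem_insert_of_mem _ (Set.mem_insert_of_mem _ (Set.mem_insert _ _))))))))))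
lemma pos11 : (γ 0 * (γ 1 * γ 2) : Cl) ∈ bladeSet := Set.mem_insert_of_mem _ (Set.mem_insert_of_mem _ (Set.mem_insert_of_mem _ (Set.mem_insert_of_mem _ (Set.mem_insert_of_mem _ (Set.mem_insert_of_mem _ (Set.mem_insert_of_mem _ (Set.mem_insert_of_mem _ (Set.mem_insert_of_mem _ (Set.mem_insert_of_mem _ (Set.mem_insert_of_mem _ (Set.mem_insert _ _)))))))))))
lemma pos12 : (γ 0 * (γ 1 * γ 3) : Cl) ∈ bladeSet := Set.mem_insert_of_mem _ (Set.mem_insert_of_mem _ (Set.mem_insert_of_mem _ (Set.mem_insert_of_mem _ (Set.mem_insert_of_mem _ (Set.mem_insert_of_mem _ (Set.mem_insert_of_mem _ (Set.mem_insert_of_mem _ (Set.mem_insert_of_mem _ (Set.mem_insert_of_mem _ (Set.mem_insert_of_mem _ (Set.mem_insert_of_mem _ (Set.mem_insert _ _))))))))))))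
lemma pos13 : (γ 0 * (γ 2 * γ 3) : Cl) ∈ bladeSet := Set.mem_insert_of_mem _ (Set.mem_insert_of_mem _ (Set.mem_insert_of_mem _ (Set.mem_insert_of_mem _ (Set.mem_insert_of_mem _ (Set.mem_insert_of_mem _ (Set.mem_insert_of_mem _ (Set.mem_insert_of_mem _ (Set.mem_insert_of_mem _ (Set.mem_insert_of_mem _ (Set.mem_insert_of_mem _ (Set.mem_insert_of_mem _ (Set.mem_insert_of_mem _ (Set.mem_insert _ _)))))))))))))
lemma pos14 : (γ 1 * (γ 2 * γ 3) : Cl) ∈ bladeSet := Set.mem_insert_of_mem _ (Set.mem_insert_of_mem _ (Set.mem_insert_of_mem _ (Set.mem_insert_of_mem _ (Set.mem_insert_of_mem _ (Set.mem_insert_of_mem _ (Set.mem_insert_of_mem _ (Set.mem_insert_of_mem _ (Set.mem_insert_of_mem _ (Set.mem_insert_of_mem _ (Set.mem_insert_of_mem _ (Set.mem_insert_of_mem _ (Set.mem_insert_of_mem _ (Set.mem_insert_of_mem _ (Set.mem_insert _ _))))))))))))))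
lemma pos15 : (γ 0 * (γ 1 * (γ 2 * γ 3)) : Cl) ∈ bladeSet := Set.mem_insert_of_mem _ (Set.mem_insert_of_mem _ (Set.mem_insert_of_mem _ (Set.mem_insert_of_mem _ (Set.mem_insert_of_mem _ (Set.mem_insert_of_mem _ (Set.mem_insert_of_mem _ (Set.mem_insert_of_mem _ (Set.mem_insert_of_mem _ (Set.mem_insert_of_mem _ (Set.mem_insert_of_mem _ (Set.mem_insert_of_mem _ (Set.mem_insert_of_mem _ (Set.mem_insert_of_mem _ (Set.mem_insert_of_mem _ (Set.mem_singleton _)))))))))))))))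

lemma blade_cases : ∀ u ∈ bladeSet, γ 0 * u ∈ Psp ∧ γ 1 * u ∈ Psp ∧ γ 2 * u ∈ Psp ∧ γ 3 * u ∈ Psp := by
  intro u hu
  simp only [bladeSet, Set.mem_insert_iff, Set.mem_singleton_iff] at hu
  rcases hu with rfl|rfl|rfl|rfl|rfl|rfl|rfl|rfl|rfl|rfl|rfl|rfl|rfl|rfl|rfl|rfl
  · -- u = blade 0
    refine ⟨?_, ?_, ?_, ?_⟩
    · try simp only [mul_one, mul_assoc, gsq0, gsq1, gsq2, gsq3, gsq0', gsq1', gsq2', gsq3', gswap h10, gswap h20, gswap h30, gswap h21, gswap h31, gswap h32, gswap' h10, gswap' h20, gswap' h30, gswap' h21, gswap' h31, gswap' h32, mul_neg, neg_neg]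
      exact Submodule.subset_span pos1
    · try simp only [mul_one, mul_assoc, gsq0, gsq1, gsq2, gsq3, gsq0', gsq1', gsq2', gsq3', gswap h10, gswap h20, gswap h30, gswap h21, gswap h31, gswap h32, gswap' h10, gswap' h20, gswap' h30, gswap' h21, gswap' h31, gswap' h32, mul_neg, neg_neg]
      exact Submodule.subset_span pos2
    · try simp only [mul_one, mul_assoc, gsq0, gsq1, gsq2, gsq3, gsq0', gsq1', gsq2', gsq3', gswap h10, gswap h20, gswap h30, gswap h21, gswap h31, gswap h32, gswap' h10, gswap' h20, gswap' h30, gswap' h21, gswap' h31, gswap' h32, mul_neg, neg_neg]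
      exact Submodule.subset_span pos3
    · try simp only [mul_one, mul_assoc, gsq0, gsq1, gsq2, gsq3, gsq0', gsq1', gsq2', gsq3', gswap h10, gswap h20, gswap h30, gswap h21, gswap h31, gswap h32, gswap' h10, gswap' h20, gswap' h30, gswap' h21, gswap' h31, gswap' h32, mul_neg, neg_neg]
      exact Submodule.subset_span pos4
  · -- u = blade 1
    refine ⟨?_, ?_, ?_, ?_⟩
    · try simp only [mul_one, mul_assoc, gsq0, gsq1, gsq2, gsq3, gsq0', gsq1', gsq2', gsq3', gswap h10, gswap h20, gswap h30, gswap h21, gswap h31, gswap h32, gswap' h10, gswap' h20, gswap' h30, gswap' h21, gswap' h31, gswap' h32, mul_neg, neg_neg]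
      exact Submodule.subset_span pos0
    · try simp only [mul_one, mul_assoc, gsq0, gsq1, gsq2, gsq3, gsq0', gsq1', gsq2', gsq3', gswap h10, gswap h20, gswap h30, gswap h21, gswap h31, gswap h32, gswap' h10, gswap' h20, gswap' h30, gswap' h21, gswap' h31, gswap' h32, mul_neg, neg_neg]
      exact neg_mem (Submodule.subset_span pos5)
    · try simp only [mul_one, mul_assoc, gsq0, gsq1, gsq2, gsq3, gsq0', gsq1', gsq2', gsq3', gswap h10, gswap h20, gswap h30, gswap h21, gswap h31, gswap h32, gswap' h10, gswap' h20, gswap' h30, gswap' h21, gswap' h31, gswap' h32, mul_neg, neg_neg]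
      exact neg_mem (Submodule.subset_span pos6)
    · try simp only [mul_one, mul_assoc, gsq0, gsq1, gsq2, gsq3, gsq0', gsq1', gsq2', gsq3', gswap h10, gswap h20, gswap h30, gswap h21, gswap h31, gswap h32, gswap' h10, gswap' h20, gswap' h30, gswap' h21, gswap' h31, gswap' h32, mul_neg, neg_neg]
      exact neg_mem (Submodule.subset_span pos7)
  · -- u = blade 2
    refine ⟨?_, ?_, ?_, ?_⟩
    · try simp only [mul_one, mul_assoc, gsq0, gsq1, gsq2, gsq3, gsq0', gsq1', gsq2', gsq3', gswap h10, gswap h20, gswap h30, gswap h21, gswap h31, gswap h32, gswap' h10, gswap' h20, gswap' h30, gswap' h21, gswap' h31, gswap' h32, mul_neg, neg_neg]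
      exact Submodule.subset_span pos5
    · try simp only [mul_one, mul_assoc, gsq0, gsq1, gsq2, gsq3, gsq0', gsq1', gsq2', gsq3', gswap h10, gswap h20, gswap h30, gswap h21, gswap h31, gswap h32, gswap' h10, gswap' h20, gswap' h30, gswap' h21, gswap' h31, gswap' h32, mul_neg, neg_neg]
      exact neg_mem (Submodule.subset_span pos0)
    · try simp only [mul_one, mul_assoc, gsq0, gsq1, gsq2, gsq3, gsq0', gsq1', gsq2', gsq3', gswap h10, gswap h20, gswap h30, gswap h21, gswap h31, gswap h32, gswap' h10, gswap' h20, gswap' h30, gswap' h21, gswap' h31, gswap' h32, mul_neg, neg_neg]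
      exact neg_mem (Submodule.subset_span pos8)
    · try simp only [mul_one, mul_assoc, gsq0, gsq1, gsq2, gsq3, gsq0', gsq1', gsq2', gsq3', gswap h10, gswap h20, gswap h30, gswap h21, gswap h31, gswap h32, gswap' h10, gswap' h20, gswap' h30, gswap' h21, gswap' h31, gswap' h32, mul_neg, neg_neg]
      exact neg_mem (Submodule.subset_span pos9)
  · -- u = blade 3
    refine ⟨?_, ?_, ?_, ?_⟩
    · try simp only [mul_one, mul_assoc, gsq0, gsq1, gsq2, gsq3, gsq0', gsq1', gsq2', gsq3', gswap h10, gswap h20, gswap h30, gswap h21, gswap h31, gswap h32, gswap' h10, gswap' h20, gswap' h30, gswap' h21, gswap' h31, gswap' h32, mul_neg, neg_neg]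
      exact Submodule.subset_span pos6
    · try simp only [mul_one, mul_assoc, gsq0, gsq1, gsq2, gsq3, gsq0', gsq1', gsq2', gsq3', gswap h10, gswap h20, gswap h30, gswap h21, gswap h31, gswap h32, gswap' h10, gswap' h20, gswap' h30, gswap' h21, gswap' h31, gswap' h32, mul_neg, neg_neg]
      exact Submodule.subset_span pos8
    · try simp only [mul_one, mul_assoc, gsq0, gsq1, gsq2, gsq3, gsq0', gsq1', gsq2', gsq3', gswap h10, gswap h20, gswap h30, gswap h21, gswap h31, gswap h32, gswap' h10, gswap' h20, gswap' h30, gswap' h21, gswap' h31, gswap' h32, mul_neg, neg_neg]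
      exact neg_mem (Submodule.subset_span pos0)
    · try simp only [mul_one, mul_assoc, gsq0, gsq1, gsq2, gsq3, gsq0', gsq1', gsq2', gsq3', gswap h10, gswap h20, gswap h30, gswap h21, gswap h31, gswap h32, gswap' h10, gswap' h20, gswap' h30, gswap' h21, gswap' h31, gswap' h32, mul_neg, neg_neg]
      exact neg_mem (Submodule.subset_span pos10)
  · -- u = blade 4
    refine ⟨?_, ?_, ?_, ?_⟩
    · try simp only [mul_one, mul_assoc, gsq0, gsq1, gsq2, gsq3, gsq0', gsq1', gsq2', gsq3', gswap h10, gswap h20, gswap h30, gswap h21, gswap h31, gswap h32, gswap' h10, gswap' h20, gswap' h30, gswap' h21, gswap' h31, gswap' h32, mul_neg, neg_neg]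
      exact Submodule.subset_span pos7
    · try simp only [mul_one, mul_assoc, gsq0, gsq1, gsq2, gsq3, gsq0', gsq1', gsq2', gsq3', gswap h10, gswap h20, gswap h30, gswap h21, gswap h31, gswap h32, gswap' h10, gswap' h20, gswap' h30, gswap' h21, gswap' h31, gswap' h32, mul_neg, neg_neg]
      exact Submodule.subset_span pos9
    · try simp only [mul_one, mul_assoc, gsq0, gsq1, gsq2, gsq3, gsq0', gsq1', gsq2', gsq3', gswap h10, gswap h20, gswap h30, gswap h21, gswap h31, gswap h32, gswap' h10, gswap' h20, gswap' h30, gswap' h21, gswap' h31, gswap' h32, mul_neg, neg_neg]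
      exact Submodule.subset_span pos10
    · try simp only [mul_one, mul_assoc, gsq0, gsq1, gsq2, gsq3, gsq0', gsq1', gsq2', gsq3', gswap h10, gswap h20, gswap h30, gswap h21, gswap h31, gswap h32, gswap' h10, gswap' h20, gswap' h30, gswap' h21, gswap' h31, gswap' h32, mul_neg, neg_neg]
      exact neg_mem (Submodule.subset_span pos0)
  · -- u = blade 5
    refine ⟨?_, ?_, ?_, ?_⟩
    · try simp only [mul_one, mul_assoc, gsq0, gsq1, gsq2, gsq3, gsq0', gsq1', gsq2', gsq3', gswap h10, gswap h20, gswap h30, gswap h21, gswap h31, gswap h32, gswap' h10, gswap' h20, gswap' h30, gswap' h21, gswap' h31, gswap' h32, mul_neg, neg_neg]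
      exact Submodule.subset_span pos2
    · try simp only [mul_one, mul_assoc, gsq0, gsq1, gsq2, gsq3, gsq0', gsq1', gsq2', gsq3', gswap h10, gswap h20, gswap h30, gswap h21, gswap h31, gswap h32, gswap' h10, gswap' h20, gswap' h30, gswap' h21, gswap' h31, gswap' h32, mul_neg, neg_neg]
      exact Submodule.subset_span pos1
    · try simp only [mul_one, mul_assoc, gsq0, gsq1, gsq2, gsq3, gsq0', gsq1', gsq2', gsq3', gswap h10, gswap h20, gswap h30, gswap h21, gswap h31, gswap h32, gswap' h10, gswap' h20, gswap' h30, gswap' h21, gswap' h31, gswap' h32, mul_neg, neg_neg]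
      exact Submodule.subset_span pos11
    · try simp only [mul_one, mul_assoc, gsq0, gsq1, gsq2, gsq3, gsq0', gsq1', gsq2', gsq3', gswap h10, gswap h20, gswap h30, gswap h21, gswap h31, gswap h32, gswap' h10, gswap' h20, gswap' h30, gswap' h21, gswap' h31, gswap' h32, mul_neg, neg_neg]
      exact Submodule.subset_span pos12
  · -- u = blade 6
    refine ⟨?_, ?_, ?_, ?_⟩
    · try simp only [mul_one, mul_assoc, gsq0, gsq1, gsq2, gsq3, gsq0', gsq1', gsq2', gsq3', gswap h10, gswap h20, gswap h30, gswap h21, gswap h31, gswap h32, gswap' h10, gswap' h20, gswap' h30, gswap' h21, gswap' h31, gswap' h32, mul_neg, neg_neg]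
      exact Submodule.subset_span pos3
    · try simp only [mul_one, mul_assoc, gsq0, gsq1, gsq2, gsq3, gsq0', gsq1', gsq2', gsq3', gswap h10, gswap h20, gswap h30, gswap h21, gswap h31, gswap h32, gswap' h10, gswap' h20, gswap' h30, gswap' h21, gswap' h31, gswap' h32, mul_neg, neg_neg]
      exact neg_mem (Submodule.subset_span pos11)
    · try simp only [mul_one, mul_assoc, gsq0, gsq1, gsq2, gsq3, gsq0', gsq1', gsq2', gsq3', gswap h10, gswap h20, gswap h30, gswap h21, gswap h31, gswap h32, gswap' h10, gswap' h20, gswap' h30, gswap' h21, gswap' h31, gswap' h32, mul_neg, neg_neg]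
      exact Submodule.subset_span pos1
    · try simp only [mul_one, mul_assoc, gsq0, gsq1, gsq2, gsq3, gsq0', gsq1', gsq2', gsq3', gswap h10, gswap h20, gswap h30, gswap h21, gswap h31, gswap h32, gswap' h10, gswap' h20, gswap' h30, gswap' h21, gswap' h31, gswap' h32, mul_neg, neg_neg]
      exact Submodule.subset_span pos13
  · -- u = blade 7
    refine ⟨?_, ?_, ?_, ?_⟩
    · try simp only [mul_one, mul_assoc, gsq0, gsq1, gsq2, gsq3, gsq0', gsq1', gsq2', gsq3', gswap h10, gswap h20, gswap h30, gswap h21, gswap h31, gswap h32, gswap' h10, gswap' h20, gswap' h30, gswap' h21, gswap' h31, gswap' h32, mul_neg, neg_neg]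
      exact Submodule.subset_span pos4
    · try simp only [mul_one, mul_assoc, gsq0, gsq1, gsq2, gsq3, gsq0', gsq1', gsq2', gsq3', gswap h10, gswap h20, gswap h30, gswap h21, gswap h31, gswap h32, gswap' h10, gswap' h20, gswap' h30, gswap' h21, gswap' h31, gswap' h32, mul_neg, neg_neg]
      exact neg_mem (Submodule.subset_span pos12)
    · try simp only [mul_one, mul_assoc, gsq0, gsq1, gsq2, gsq3, gsq0', gsq1', gsq2', gsq3', gswap h10, gswap h20, gswap h30, gswap h21, gswap h31, gswap h32, gswap' h10, gswap' h20, gswap' h30, gswap' h21, gswap' h31, gswap' h32, mul_neg, neg_neg]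
      exact neg_mem (Submodule.subset_span pos13)
    · try simp only [mul_one, mul_assoc, gsq0, gsq1, gsq2, gsq3, gsq0', gsq1', gsq2', gsq3', gswap h10, gswap h20, gswap h30, gswap h21, gswap h31, gswap h32, gswap' h10, gswap' h20, gswap' h30, gswap' h21, gswap' h31, gswap' h32, mul_neg, neg_neg]
      exact Submodule.subset_span pos1
  · -- u = blade 8
    refine ⟨?_, ?_, ?_, ?_⟩
    · try simp only [mul_one, mul_assoc, gsq0, gsq1, gsq2, gsq3, gsq0', gsq1', gsq2', gsq3', gswap h10, gswap h20, gswap h30, gswap h21, gswap h31, gswap h32, gswap' h10, gswap' h20, gswap' h30, gswap' h21, gswap' h31, gswap' h32, mul_neg, neg_neg]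
      exact Submodule.subset_span pos11
    · try simp only [mul_one, mul_assoc, gsq0, gsq1, gsq2, gsq3, gsq0', gsq1', gsq2', gsq3', gswap h10, gswap h20, gswap h30, gswap h21, gswap h31, gswap h32, gswap' h10, gswap' h20, gswap' h30, gswap' h21, gswap' h31, gswap' h32, mul_neg, neg_neg]
      exact neg_mem (Submodule.subset_span pos3)
    · try simp only [mul_one, mul_assoc, gsq0, gsq1, gsq2, gsq3, gsq0', gsq1', gsq2', gsq3', gswap h10, gswap h20, gswap h30, gswap h21, gswap h31, gswap h32, gswap' h10, gswap' h20, gswap' h30, gswap' h21, gswap' h31, gswap' h32, mul_neg, neg_neg]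
      exact Submodule.subset_span pos2
    · try simp only [mul_one, mul_assoc, gsq0, gsq1, gsq2, gsq3, gsq0', gsq1', gsq2', gsq3', gswap h10, gswap h20, gswap h30, gswap h21, gswap h31, gswap h32, gswap' h10, gswap' h20, gswap' h30, gswap' h21, gswap' h31, gswap' h32, mul_neg, neg_neg]
      exact Submodule.subset_span pos14
  · -- u = blade 9
    refine ⟨?_, ?_, ?_, ?_⟩
    · try simp only [mul_one, mul_assoc, gsq0, gsq1, gsq2, gsq3, gsq0', gsq1', gsq2', gsq3', gswap h10, gswap h20, gswap h30, gswap h21, gswap h31, gswap h32, gswap' h10, gswap' h20, gswap' h30, gswap' h21, gswap' h31, gswap' h32, mul_neg, neg_neg]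
      exact Submodule.subset_span pos12
    · try simp only [mul_one, mul_assoc, gsq0, gsq1, gsq2, gsq3, gsq0', gsq1', gsq2', gsq3', gswap h10, gswap h20, gswap h30, gswap h21, gswap h31, gswap h32, gswap' h10, gswap' h20, gswap' h30, gswap' h21, gswap' h31, gswap' h32, mul_neg, neg_neg]
      exact neg_mem (Submodule.subset_span pos4)
    · try simp only [mul_one, mul_assoc, gsq0, gsq1, gsq2, gsq3, gsq0', gsq1', gsq2', gsq3', gswap h10, gswap h20, gswap h30, gswap h21, gswap h31, gswap h32, gswap' h10, gswap' h20, gswap' h30, gswap' h21, gswap' h31, gswap' h32, mul_neg, neg_neg]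
      exact neg_mem (Submodule.subset_span pos14)
    · try simp only [mul_one, mul_assoc, gsq0, gsq1, gsq2, gsq3, gsq0', gsq1', gsq2', gsq3', gswap h10, gswap h20, gswap h30, gswap h21, gswap h31, gswap h32, gswap' h10, gswap' h20, gswap' h30, gswap' h21, gswap' h31, gswap' h32, mul_neg, neg_neg]
      exact Submodule.subset_span pos2
  · -- u = blade 10
    refine ⟨?_, ?_, ?_, ?_⟩
    · try simp only [mul_one, mul_assoc, gsq0, gsq1, gsq2, gsq3, gsq0', gsq1', gsq2', gsq3', gswap h10, gswap h20, gswap h30, gswap h21, gswap h31, gswap h32, gswap' h10, gswap' h20, gswap' h30, gswap' h21, gswap' h31, gswap' h32, mul_neg, neg_neg]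
      exact Submodule.subset_span pos13
    · try simp only [mul_one, mul_assoc, gsq0, gsq1, gsq2, gsq3, gsq0', gsq1', gsq2', gsq3', gswap h10, gswap h20, gswap h30, gswap h21, gswap h31, gswap h32, gswap' h10, gswap' h20, gswap' h30, gswap' h21, gswap' h31, gswap' h32, mul_neg, neg_neg]
      exact Submodule.subset_span pos14
    · try simp only [mul_one, mul_assoc, gsq0, gsq1, gsq2, gsq3, gsq0', gsq1', gsq2', gsq3', gswap h10, gswap h20, gswap h30, gswap h21, gswap h31, gswap h32, gswap' h10, gswap' h20, gswap' h30, gswap' h21, gswap' h31, gswap' h32, mul_neg, neg_neg]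
      exact neg_mem (Submodule.subset_span pos4)
    · try simp only [mul_one, mul_assoc, gsq0, gsq1, gsq2, gsq3, gsq0', gsq1', gsq2', gsq3', gswap h10, gswap h20, gswap h30, gswap h21, gswap h31, gswap h32, gswap' h10, gswap' h20, gswap' h30, gswap' h21, gswap' h31, gswap' h32, mul_neg, neg_neg]
      exact Submodule.subset_span pos3
  · -- u = blade 11
    refine ⟨?_, ?_, ?_, ?_⟩
    · try simp only [mul_one, mul_assoc, gsq0, gsq1, gsq2, gsq3, gsq0', gsq1', gsq2', gsq3', gswap h10, gswap h20, gswap h30, gswap h21, gswap h31, gswap h32, gswap' h10, gswap' h20, gswap' h30, gswap' h21, gswap' h31, gswap' h32, mul_neg, neg_neg]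
      exact Submodule.subset_span pos8
    · try simp only [mul_one, mul_assoc, gsq0, gsq1, gsq2, gsq3, gsq0', gsq1', gsq2', gsq3', gswap h10, gswap h20, gswap h30, gswap h21, gswap h31, gswap h32, gswap' h10, gswap' h20, gswap' h30, gswap' h21, gswap' h31, gswap' h32, mul_neg, neg_neg]
      exact Submodule.subset_span pos6
    · try simp only [mul_one, mul_assoc, gsq0, gsq1, gsq2, gsq3, gsq0', gsq1', gsq2', gsq3', gswap h10, gswap h20, gswap h30, gswap h21, gswap h31, gswap h32, gswap' h10, gswap' h20, gswap' h30, gswap' h21, gswap' h31, gswap' h32, mul_neg, neg_neg]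
      exact neg_mem (Submodule.subset_span pos5)
    · try simp only [mul_one, mul_assoc, gsq0, gsq1, gsq2, gsq3, gsq0', gsq1', gsq2', gsq3', gswap h10, gswap h20, gswap h30, gswap h21, gswap h31, gswap h32, gswap' h10, gswap' h20, gswap' h30, gswap' h21, gswap' h31, gswap' h32, mul_neg, neg_neg]
      exact neg_mem (Submodule.subset_span pos15)
  · -- u = blade 12
    refine ⟨?_, ?_, ?_, ?_⟩
    · try simp only [mul_one, mul_assoc, gsq0, gsq1, gsq2, gsq3, gsq0', gsq1', gsq2', gsq3', gswap h10, gswap h20, gswap h30, gswap h21, gswap h31, gswap h32, gswap' h10, gswap' h20, gswap' h30, gswap' h21, gswap' h31, gswap' h32, mul_neg, neg_neg]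
      exact Submodule.subset_span pos9
    · try simp only [mul_one, mul_assoc, gsq0, gsq1, gsq2, gsq3, gsq0', gsq1', gsq2', gsq3', gswap h10, gswap h20, gswap h30, gswap h21, gswap h31, gswap h32, gswap' h10, gswap' h20, gswap' h30, gswap' h21, gswap' h31, gswap' h32, mul_neg, neg_neg]
      exact Submodule.subset_span pos7
    · try simp only [mul_one, mul_assoc, gsq0, gsq1, gsq2, gsq3, gsq0', gsq1', gsq2', gsq3', gswap h10, gswap h20, gswap h30, gswap h21, gswap h31, gswap h32, gswap' h10, gswap' h20, gswap' h30, gswap' h21, gswap' h31, gswap' h32, mul_neg, neg_neg]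
      exact Submodule.subset_span pos15
    · try simp only [mul_one, mul_assoc, gsq0, gsq1, gsq2, gsq3, gsq0', gsq1', gsq2', gsq3', gswap h10, gswap h20, gswap h30, gswap h21, gswap h31, gswap h32, gswap' h10, gswap' h20, gswap' h30, gswap' h21, gswap' h31, gswap' h32, mul_neg, neg_neg]
      exact neg_mem (Submodule.subset_span pos5)
  · -- u = blade 13
    refine ⟨?_, ?_, ?_, ?_⟩
    · try simp only [mul_one, mul_assoc, gsq0, gsq1, gsq2, gsq3, gsq0', gsq1', gsq2', gsq3', gswap h10, gswap h20, gswap h30, gswap h21, gswap h31, gswap h32, gswap' h10, gswap' h20, gswap' h30, gswap' h21, gswap' h31, gswap' h32, mul_neg, neg_neg]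
      exact Submodule.subset_span pos10
    · try simp only [mul_one, mul_assoc, gsq0, gsq1, gsq2, gsq3, gsq0', gsq1', gsq2', gsq3', gswap h10, gswap h20, gswap h30, gswap h21, gswap h31, gswap h32, gswap' h10, gswap' h20, gswap' h30, gswap' h21, gswap' h31, gswap' h32, mul_neg, neg_neg]
      exact neg_mem (Submodule.subset_span pos15)
    · try simp only [mul_one, mul_assoc, gsq0, gsq1, gsq2, gsq3, gsq0', gsq1', gsq2', gsq3', gswap h10, gswap h20, gswap h30, gswap h21, gswap h31, gswap h32, gswap' h10, gswap' h20, gswap' h30, gswap' h21, gswap' h31, gswap' h32, mul_neg, neg_neg]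
      exact Submodule.subset_span pos7
    · try simp only [mul_one, mul_assoc, gsq0, gsq1, gsq2, gsq3, gsq0', gsq1', gsq2', gsq3', gswap h10, gswap h20, gswap h30, gswap h21, gswap h31, gswap h32, gswap' h10, gswap' h20, gswap' h30, gswap' h21, gswap' h31, gswap' h32, mul_neg, neg_neg]
      exact neg_mem (Submodule.subset_span pos6)
  · -- u = blade 14
    refine ⟨?_, ?_, ?_, ?_⟩
    · try simp only [mul_one, mul_assoc, gsq0, gsq1, gsq2, gsq3, gsq0', gsq1', gsq2', gsq3', gswap h10, gswap h20, gswap h30, gswap h21, gswap h31, gswap h32, gswap' h10, gswap' h20, gswap' h30, gswap' h21, gswap' h31, gswap' h32, mul_neg, neg_neg]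
      exact Submodule.subset_span pos15
    · try simp only [mul_one, mul_assoc, gsq0, gsq1, gsq2, gsq3, gsq0', gsq1', gsq2', gsq3', gswap h10, gswap h20, gswap h30, gswap h21, gswap h31, gswap h32, gswap' h10, gswap' h20, gswap' h30, gswap' h21, gswap' h31, gswap' h32, mul_neg, neg_neg]
      exact neg_mem (Submodule.subset_span pos10)
    · try simp only [mul_one, mul_assoc, gsq0, gsq1, gsq2, gsq3, gsq0', gsq1', gsq2', gsq3', gswap h10, gswap h20, gswap h30, gswap h21, gswap h31, gswap h32, gswap' h10, gswap' h20, gswap' h30, gswap' h21, gswap' h31, gswap' h32, mul_neg, neg_neg]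
      exact Submodule.subset_span pos9
    · try simp only [mul_one, mul_assoc, gsq0, gsq1, gsq2, gsq3, gsq0', gsq1', gsq2', gsq3', gswap h10, gswap h20, gswap h30, gswap h21, gswap h31, gswap h32, gswap' h10, gswap' h20, gswap' h30, gswap' h21, gswap' h31, gswap' h32, mul_neg, neg_neg]
      exact neg_mem (Submodule.subset_span pos8)
  · -- u = blade 15
    refine ⟨?_, ?_, ?_, ?_⟩
    · try simp only [mul_one, mul_assoc, gsq0, gsq1, gsq2, gsq3, gsq0', gsq1', gsq2', gsq3', gswap h10, gswap h20, gswap h30, gswap h21, gswap h31, gswap h32, gswap' h10, gswap' h20, gswap' h30, gswap' h21, gswap' h31, gswap' h32, mul_neg, neg_neg]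
      exact Submodule.subset_span pos14
    · try simp only [mul_one, mul_assoc, gsq0, gsq1, gsq2, gsq3, gsq0', gsq1', gsq2', gsq3', gswap h10, gswap h20, gswap h30, gswap h21, gswap h31, gswap h32, gswap' h10, gswap' h20, gswap' h30, gswap' h21, gswap' h31, gswap' h32, mul_neg, neg_neg]
      exact Submodule.subset_span pos13
    · try simp only [mul_one, mul_assoc, gsq0, gsq1, gsq2, gsq3, gsq0', gsq1', gsq2', gsq3', gswap h10, gswap h20, gswap h30, gswap h21, gswap h31, gswap h32, gswap' h10, gswap' h20, gswap' h30, gswap' h21, gswap' h31, gswap' h32, mul_neg, neg_neg]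
      exact neg_mem (Submodule.subset_span pos12)
    · try simp only [mul_one, mul_assoc, gsq0, gsq1, gsq2, gsq3, gsq0', gsq1', gsq2', gsq3', gswap h10, gswap h20, gswap h30, gswap h21, gswap h31, gswap h32, gswap' h10, gswap' h20, gswap' h30, gswap' h21, gswap' h31, gswap' h32, mul_neg, neg_neg]
      exact Submodule.subset_span pos11
lemma gamma_mul_mem (a : Fin 4) {p : Cl} (hp : p ∈ Psp) : γ a * p ∈ Psp := by
  induction hp using Submodule.span_induction with
  | mem u hu =>
      obtain ⟨c0, c1, c2, c3⟩ := blade_cases u hu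
      fin_cases a <;> assumption
  | zero => rw [mul_zero]; exact zero_mem _
  | add x y _ _ hx hy => rw [mul_add]; exact add_mem hx hy
  | smul r x _ hx => rw [mul_smul_comm]; exact Submodule.smul_mem _ _ hx

lemma iota_mul_mem (v : Fin 4 → ℝ) {p : Cl} (hp : p ∈ Psp) : ι Qm v * p ∈ Psp := by
  have hv : v = ∑ a, v a • (Pi.single a 1 : Fin 4 → ℝ) := by
    ext i; simp [Pi.single_apply]
  rw [hv, map_sum, Finset.sum_mul]
  refine Submodule.sum_mem _ fun a _ => ?_
  rw [map_smul, smul_mul_assoc]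
  exact Submodule.smul_mem _ _ (gamma_mul_mem a hp)

lemma one_mem_Psp : (1 : Cl) ∈ Psp := Submodule.subset_span pos0

lemma bladeSet_finite : bladeSet.Finite := by
  unfold bladeSet
  repeat' apply Set.Finite.insert
  exact Set.finite_singleton _

lemma Psp_eq_top : Psp = ⊤ := by
  rw [eq_top_iff]
  intro x _
  have key : ∀ y : Cl, y ∈ Psp ∧ ∀ p ∈ Psp, y * p ∈ Psp := by
    intro y
    induction y using CliffordAlgebra.induction with
    | algebraMap r =>
        constructor
        · rw [Algebra.algebraMap_eq_smul_one]
          exact Submodule.smul_mem _ _ one_mem_Psp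
        · intro p hp
          rw [← Algebra.smul_def]
          exact Submodule.smul_mem _ _ hp
    | ι v =>
        constructor
        · simpa using iota_mul_mem v one_mem_Psp
        · intro p hp; exact iota_mul_mem v hp
    | mul x y hx hy =>
        exact ⟨hx.2 y hy.1, fun p hp => by rw [mul_assoc]; exact hx.2 _ (hy.2 p hp)⟩
    | add x y hx hy =>
        exact ⟨add_mem hx.1 hy.1, fun p hp => by rw [add_mul]; exact add_mem (hx.2 p hp) (hy.2 p hp)⟩
  exact (key x).1

instance : Module.Finite ℝ Cl := by
  rw [Module.finite_def, ← Psp_eq_top]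
  exact Submodule.fg_def.mpr ⟨bladeSet, bladeSet_finite, rfl⟩
def clEquiv : Cl ≃ₗ[ℝ] (Fin (Module.finrank ℝ Cl) → ℝ) :=
  (Module.finBasis ℝ Cl).equivFun

instance : NormedAddCommGroup Cl :=
  NormedAddCommGroup.induced Cl (Fin (Module.finrank ℝ Cl) → ℝ)
    clEquiv.toLinearMap clEquiv.injective

instance : NormedSpace ℝ Cl :=
  NormedSpace.induced ℝ Cl (Fin (Module.finrank ℝ Cl) → ℝ) clEquiv.toLinearMap

instance : ContinuousMul Cl := by
  constructor
  let T : Cl →ₗ[ℝ] (Cl →L[ℝ] Cl) :=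
    LinearMap.toContinuousLinearMap.toLinearMap ∘ₗ LinearMap.mul ℝ Cl
  have hT : Continuous T := T.continuous_of_finiteDimensional
  have : Continuous fun p : Cl × Cl => (T p.1) p.2 :=
    isBoundedBilinearMap_apply.continuous.comp (hT.prodMap continuous_id)
  exact this

instance : IsTopologicalSemiring Cl := ⟨⟩
instance : IsTopologicalRing Cl := ⟨⟩
def πk (k : ℕ) : Cl →ₗ[ℝ] Cl :=
  (equivExterior Qm).symm.toLinearMap ∘ₗ
    (GradedAlgebra.proj (fun i : ℕ => ⋀[ℝ]^i (Fin 4 → ℝ)) k) ∘ₗ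
      (equivExterior Qm).toLinearMap

def TraceR : Cl →ₗ[ℝ] ℝ :=
  (ExteriorAlgebra.algebraMapInv).toLinearMap ∘ₗ (equivExterior Qm).toLinearMap

def βe : Cl := γ 0
def θe : Cl := γ 0 * (γ 1 * (γ 2 * γ 3))

def rev : Cl →ₗ[ℝ] Cl := reverse (Q := Qm)

def dag (u : Cl) : Cl := βe * rev u * βe

def ClEven : Submodule ℝ Cl := evenOdd Qm 0

-- complexification
abbrev CCl := ℂ ⊗[ℝ] Cl

def ρc : Cl →ₐ[ℝ] CCl := Algebra.TensorProduct.includeRight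

def conjC : CCl →ₗ[ℝ] CCl :=
  TensorProduct.map Complex.conjAe.toLinearMap LinearMap.id

def revC : CCl →ₗ[ℝ] CCl := TensorProduct.map LinearMap.id rev

def βC : CCl := ρc βe
def θC : CCl := ρc θe

def dagC (U : CCl) : CCl := βC * conjC (revC U) * βC

def χe : CCl := (2⁻¹ : ℂ) • (1 - Complex.I • θC)

def TraceC : CCl →ₗ[ℝ] ℂ :=
  (TensorProduct.rid ℝ ℂ).toLinearMap ∘ₗ LinearMap.lTensor ℂ TraceR

def πkC (k : ℕ) : CCl →ₗ[ℝ] CCl := LinearMap.lTensor ℂ (πk k)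

def CClEven : Submodule ℂ CCl := Submodule.baseChange ℂ ClEven

instance : Module.Finite ℂ CCl := Module.Finite.base_change ℝ ℂ Cl

def cclEquiv : CCl ≃ₗ[ℂ] (Fin (Module.finrank ℂ CCl) → ℂ) :=
  (Module.finBasis ℂ CCl).equivFun

instance : NormedAddCommGroup CCl :=
  NormedAddCommGroup.induced CCl (Fin (Module.finrank ℂ CCl) → ℂ)
    cclEquiv.toLinearMap cclEquiv.injective

instance : NormedSpace ℂ CCl :=
  NormedSpace.induced ℂ CCl (Fin (Module.finrank ℂ CCl) → ℂ) cclEquiv.toLinearMap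

instance : ContinuousMul CCl := by
  constructor
  let T : CCl →ₗ[ℂ] (CCl →L[ℂ] CCl) :=
    LinearMap.toContinuousLinearMap.toLinearMap ∘ₗ LinearMap.mul ℂ CCl
  have hT : Continuous T := T.continuous_of_finiteDimensional
  have : Continuous fun p : CCl × CCl => (T p.1) p.2 :=
    isBoundedBilinearMap_apply.continuous.comp (hT.prodMap continuous_id)
  exact this

set_option synthInstance.maxHeartbeats 1000000 in
instance : ContinuousAdd CCl := inferInstance
set_option synthInstance.maxHeartbeats 1000000 in
instance : ContinuousNeg CCl := inferInstance
instance : IsTopologicalSemiring CCl := ⟨⟩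
instance : IsTopologicalRing CCl := ⟨⟩

set_option synthInstance.maxHeartbeats 1000000 in
instance : NormedSpace ℝ CCl := inferInstance
-- spacetime, derivatives, smoothness
def pd {E : Type*} [NormedAddCommGroup E] [NormedSpace ℝ E]
    (μ : Fin 4) (F : (Fin 4 → ℝ) → E) (x : Fin 4 → ℝ) : E :=
  fderiv ℝ F x (Pi.single μ 1)

def SmoothF {E : Type*} [NormedAddCommGroup E] [NormedSpace ℝ E]
    (F : (Fin 4 → ℝ) → E) : Prop :=
  ContDiff ℝ (⊤ : ℕ∞) F

def ηm : Fin 4 → Fin 4 → ℝ := fun μ ν => if μ = ν then ηd μ else 0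

-- Lie-theoretic sets
def L3set : Set Cl := {s | s ∈ ClEven ∧ dag s = -s ∧ βe * s = s * βe}
def L4set : Set Cl := {s | s ∈ ClEven ∧ dag s = -s}
def G3set : Set Cl := {S | S ∈ ClEven ∧ dag S * S = 1 ∧ βe * S = S * βe}
def KχSet : Set CCl := {U | U = U * χe ∧ U = χe * U}
def LχSet : Set CCl := {s | s ∈ KχSet ∧ dagC s = -s}
def GχSet : Set CCl := {S | S ∈ CClEven ∧ S - 1 ∈ KχSet ∧ dagC S * S = 1}

def τ1 : Cl := γ 2 * γ 3
def τ2 : Cl := -(γ 1 * γ 3)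
def τ3 : Cl := γ 1 * γ 2

def su2Set : Set (Matrix (Fin 2) (Fin 2) ℂ) := {A | A.conjTranspose = -A ∧ A.trace = 0}
def u2Set : Set (Matrix (Fin 2) (Fin 2) ℂ) := {A | A.conjTranspose = -A}
def SU2Set : Set (Matrix (Fin 2) (Fin 2) ℂ) := Matrix.specialUnitaryGroup (Fin 2) ℂ

-- genvector fields
def IsGenvector (h : Fin 4 → (Fin 4 → ℝ) → Cl) : Prop :=
  (∀ μ, SmoothF (h μ)) ∧
  (∀ μ x, h μ x ∈ LinearMap.range (ι Qm)) ∧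
  (∀ μ ν x, h μ x * h ν x + h ν x * h μ x = algebraMap ℝ Cl (2 * ηm μ ν)) ∧
  (∀ x, ∑ μ, pd μ (fun y => πk 0 (βe * h μ y)) x = 0)

-- the main system of equations (Section 4)
def MainSystem (m : ℝ) (Ψ : (Fin 4 → ℝ) → CCl) (h : Fin 4 → (Fin 4 → ℝ) → Cl)
    (A : Fin 4 → (Fin 4 → ℝ) → CCl) (Fa : Fin 4 → Fin 4 → (Fin 4 → ℝ) → CCl)
    (C : Fin 4 → (Fin 4 → ℝ) → Cl) (Fc : Fin 4 → Fin 4 → (Fin 4 → ℝ) → Cl) : Prop :=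
  (∀ x, ∑ μ, ρc (h μ x) * (pd μ Ψ x + Ψ x * A μ x - ρc (C μ x) * Ψ x)
      + ((m : ℂ) * Complex.I) • Ψ x = 0) ∧
  (∀ μ ν x, pd μ (A ν) x - pd ν (A μ) x - (A μ x * A ν x - A ν x * A μ x) = Fa μ ν x) ∧
  (∀ ν x, ∑ μ, pd μ (fun y => (ηd μ * ηd ν) • Fa μ ν y) x
      - ∑ μ, (A μ x * ((ηd μ * ηd ν) • Fa μ ν x) - ((ηd μ * ηd ν) • Fa μ ν x) * A μ x)
      = Complex.I • (dagC (Ψ x) * βC * ρc (h ν x) * Ψ x)) ∧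
  (∀ μ ν x, pd μ (fun y => C ν y) x - pd ν (fun y => C μ y) x
      - (C μ x * C ν x - C ν x * C μ x) = Fc μ ν x) ∧
  (∀ ν x, ∑ μ, pd μ (fun y => (ηd μ * ηd ν) • Fc μ ν y) x
      - ∑ μ, (C μ x * ((ηd μ * ηd ν) • Fc μ ν x) - ((ηd μ * ηd ν) • Fc μ ν x) * C μ x)
      = θe * βe * h ν x - πk 4 (θe * βe * h ν x))
/-- The matrix of currents J^μ_{kl} = Ψ_k† iβ h^μ Ψ_l. -/
def Jmat (Ψ : Fin 3 → (Fin 4 → ℝ) → CCl) (h : Fin 4 → (Fin 4 → ℝ) → Cl)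
    (μ : Fin 4) (k l : Fin 3) (x : Fin 4 → ℝ) : CCl :=
  Complex.I • (dagC (Ψ k x) * βC * ρc (h μ x) * Ψ l x)

/-- J^μ_{(A)} = (1/3)(J^μ_{11} + J^μ_{22} + J^μ_{33}). -/
def JAq (Ψ : Fin 3 → (Fin 4 → ℝ) → CCl) (h : Fin 4 → (Fin 4 → ℝ) → Cl)
    (μ : Fin 4) (x : Fin 4 → ℝ) : CCl :=
  (3 : ℂ)⁻¹ • ∑ l, Jmat Ψ h μ l l x

/-- The entries of the matrix current J̲^μ_{(B)}: the coefficient of e in π⁰(J^μ_{kl}). -/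
def JBq (Ψ : Fin 3 → (Fin 4 → ℝ) → CCl) (h : Fin 4 → (Fin 4 → ℝ) → Cl)
    (μ : Fin 4) (k l : Fin 3) (x : Fin 4 → ℝ) : ℂ :=
  TraceC (Jmat Ψ h μ k l x)

/-- The current J^μ_{(C)} = θβh^μ − π⁴(θβh^μ). -/
def JCcurrent (h : Fin 4 → (Fin 4 → ℝ) → Cl) (μ : Fin 4) (x : Fin 4 → ℝ) : Cl :=
  θe * βe * h μ x - πk 4 (θe * βe * h μ x)

/-- The quantity ∂_μ(θβh^μ) − [C_μ, θβh^μ]. -/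
def Dquantity (h : Fin 4 → (Fin 4 → ℝ) → Cl) (C : Fin 4 → (Fin 4 → ℝ) → Cl)
    (x : Fin 4 → ℝ) : Cl :=
  ∑ μ, pd μ (fun y => θe * βe * h μ y) x
    - ∑ μ, (C μ x * (θe * βe * h μ x) - (θe * βe * h μ x) * C μ x)


/-! ### Auxiliary lemmas for Theorem 3 -/

section Aux

abbrev ExtA := ExteriorAlgebra ℝ (Fin 4 → ℝ)
def εE (a : Fin 4) : ExtA := ExteriorAlgebra.ι ℝ (Pi.single a 1)
abbrev Pι : Submodule ℝ ExtA := LinearMap.range (ExteriorAlgebra.ι ℝ (M := Fin 4 → ℝ))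

lemma eqE_gamma (a : Fin 4) : equivExterior Qm (γ a) = εE a := by
  simp [equivExterior, γ, εE]

lemma eqE_blade2 {a b : Fin 4} (h : a ≠ b) :
    equivExterior Qm (γ a * γ b) = εE a * εE b := by
  have hq := gortho h
  rw [QuadraticMap.isOrtho_def] at hq
  simp [equivExterior, γ, εE, CliffordAlgebra.changeForm_ι_mul_ι, hq, gortho h, map_add, sub_self,
    mul_zero, sub_zero]

lemma Bzero {a b : Fin 4} (h : a ≠ b) :
    QuadraticMap.associated (R := ℝ) (-Qm) (Pi.single a 1) (Pi.single b 1) = 0 := by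
  have := gortho h
  rw [QuadraticMap.isOrtho_def] at this
  simp [QuadraticMap.associated_apply, this]

lemma eqE_theta : equivExterior Qm θe = εE 0 * (εE 1 * (εE 2 * εE 3)) := by
  simp only [equivExterior, θe, γ, εE, CliffordAlgebra.changeFormEquiv_apply,
    CliffordAlgebra.changeForm_ι_mul, CliffordAlgebra.changeForm_ι,
    CliffordAlgebra.contractLeft_ι_mul, CliffordAlgebra.contractLeft_ι,
    Bzero h10.symm, Bzero h20.symm, Bzero h30.symm, Bzero h21.symm, Bzero h31.symm, Bzero h32.symm,
    map_zero, zero_smul, zero_sub, mul_neg, neg_neg, mul_zero, sub_zero, smul_zero, neg_zero,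
    LinearMap.map_zero]

lemma πk_apply' (k : ℕ) (x : Cl) : πk k x =
    (equivExterior Qm).symm (GradedAlgebra.proj (fun i : ℕ => ⋀[ℝ]^i (Fin 4 → ℝ)) k
      (equivExterior Qm x)) := rfl

lemma πk_same {k : ℕ} {x : Cl} (hx : equivExterior Qm x ∈ ⋀[ℝ]^k (Fin 4 → ℝ)) :
    πk k x = x := by
  rw [πk_apply', GradedAlgebra.proj_apply,
    DirectSum.decompose_of_mem_same (ℳ := fun i : ℕ => ⋀[ℝ]^i (Fin 4 → ℝ)) hx,
    LinearEquiv.symm_apply_apply]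

lemma πk_ne {k j : ℕ} {x : Cl} (hx : equivExterior Qm x ∈ ⋀[ℝ]^j (Fin 4 → ℝ)) (hjk : j ≠ k) :
    πk k x = 0 := by
  rw [πk_apply', GradedAlgebra.proj_apply,
    DirectSum.decompose_of_mem_ne (ℳ := fun i : ℕ => ⋀[ℝ]^i (Fin 4 → ℝ)) hx hjk, map_zero]

lemma εE_mem2 (a b : Fin 4) : εE a * εE b ∈ (⋀[ℝ]^2 (Fin 4 → ℝ)) := by
  show _ ∈ Pι ^ 2
  rw [pow_two]
  exact Submodule.mul_mem_mul ⟨_, rfl⟩ ⟨_, rfl⟩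

lemma εE_mem4 : εE 0 * (εE 1 * (εE 2 * εE 3)) ∈ (⋀[ℝ]^4 (Fin 4 → ℝ)) := by
  show _ ∈ Pι ^ (3+1)
  rw [pow_succ']
  refine Submodule.mul_mem_mul ⟨_, rfl⟩ ?_
  show _ ∈ Pι ^ (2+1)
  rw [pow_succ']
  exact Submodule.mul_mem_mul ⟨_, rfl⟩ (εE_mem2 2 3)

lemma one_mem0 : (1 : ExtA) ∈ (⋀[ℝ]^0 (Fin 4 → ℝ)) := by
  show _ ∈ Pι ^ 0
  rw [pow_zero]
  exact Submodule.mem_one.mpr ⟨1, map_one _⟩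

lemma πk4_theta : πk 4 θe = θe := πk_same (eqE_theta ▸ εE_mem4)

lemma eqE_one : equivExterior Qm (1 : Cl) = 1 := by simp [equivExterior]

lemma πk0_one : πk 0 (1 : Cl) = 1 := by
  apply πk_same
  rw [eqE_one]; exact one_mem0

lemma πk0_scalar (u : Cl) : ∃ r : ℝ, πk 0 u = algebraMap ℝ Cl r := by
  have hmem : ((DirectSum.decompose (fun i : ℕ => ⋀[ℝ]^i (Fin 4 → ℝ)) (equivExterior Qm u)) 0 : ExtA)
      ∈ Pι ^ 0 := SetLike.coe_mem _
  rw [pow_zero, Submodule.mem_one] at hmem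
  obtain ⟨r, hr⟩ := hmem
  refine ⟨r, ?_⟩
  rw [πk_apply', GradedAlgebra.proj_apply, ← hr]
  simp [equivExterior]

lemma tg0 : γ 0 * θe = -(θe * γ 0) := by
  simp only [θe, mul_one, mul_assoc, gsq0, gsq1, gsq2, gsq3, gsq0', gsq1', gsq2', gsq3', gswap h10, gswap h20, gswap h30, gswap h21, gswap h31, gswap h32, gswap' h10, gswap' h20, gswap' h30, gswap' h21, gswap' h31, gswap' h32, mul_neg, neg_neg]
lemma tg1 : γ 1 * θe = -(θe * γ 1) := by
  simp only [θe, mul_one, mul_assoc, gsq0, gsq1, gsq2, gsq3, gsq0', gsq1', gsq2', gsq3', gswap h10, gswap h20, gswap h30, gswap h21, gswap h31, gswap h32, gswap' h10, gswap' h20, gswap' h30, gswap' h21, gswap' h31, gswap' h32, mul_neg, neg_neg]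
lemma tg2 : γ 2 * θe = -(θe * γ 2) := by
  simp only [θe, mul_one, mul_assoc, gsq0, gsq1, gsq2, gsq3, gsq0', gsq1', gsq2', gsq3', gswap h10, gswap h20, gswap h30, gswap h21, gswap h31, gswap h32, gswap' h10, gswap' h20, gswap' h30, gswap' h21, gswap' h31, gswap' h32, mul_neg, neg_neg]
lemma tg3 : γ 3 * θe = -(θe * γ 3) := by
  simp only [θe, mul_one, mul_assoc, gsq0, gsq1, gsq2, gsq3, gsq0', gsq1', gsq2', gsq3', gswap h10, gswap h20, gswap h30, gswap h21, gswap h31, gswap h32, gswap' h10, gswap' h20, gswap' h30, gswap' h21, gswap' h31, gswap' h32, mul_neg, neg_neg]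

lemma tg (a : Fin 4) : γ a * θe = -(θe * γ a) := by
  fin_cases a
  · exact tg0
  · exact tg1
  · exact tg2
  · exact tg3

lemma ι_theta (v : Fin 4 → ℝ) : ι Qm v * θe = -(θe * ι Qm v) := by
  have hv : v = ∑ a, v a • (Pi.single a 1 : Fin 4 → ℝ) := by
    ext i; simp [Pi.single_apply]
  rw [hv, map_sum, Finset.sum_mul, Finset.mul_sum, ← Finset.sum_neg_distrib]
  refine Finset.sum_congr rfl fun a _ => ?_
  rw [map_smul, smul_mul_assoc, mul_smul_comm, ← smul_neg]
  exact congrArg _ (tg a)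

lemma even_theta {x : Cl} (hx : x ∈ ClEven) : θe * x = x * θe := by
  refine CliffordAlgebra.even_induction (Q := Qm)
    (motive := fun y _ => θe * y = y * θe) ?_ ?_ ?_ x hx
  · intro r; rw [Algebra.commutes]
  · intro x y hx hy ihx ihy; rw [mul_add, add_mul, ihx, ihy]
  · intro m₁ m₂ x hx ih
    have h1 : θe * ι Qm m₁ = -(ι Qm m₁ * θe) := by rw [ι_theta, neg_neg]
    have h2 : θe * ι Qm m₂ = -(ι Qm m₂ * θe) := by rw [ι_theta, neg_neg]
    rw [mul_assoc _ x θe, ← ih, ← mul_assoc, ← mul_assoc, h1, neg_mul, mul_assoc (ι Qm m₁), h2,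
      mul_neg, neg_neg, ← mul_assoc, ← mul_assoc]

lemma w01 : θe * (γ 0 * γ 1) = γ 2 * γ 3 := by
  simp only [θe, mul_one, mul_assoc, gsq0, gsq1, gsq2, gsq3, gsq0', gsq1', gsq2', gsq3', gswap h10, gswap h20, gswap h30, gswap h21, gswap h31, gswap h32, gswap' h10, gswap' h20, gswap' h30, gswap' h21, gswap' h31, gswap' h32, mul_neg, neg_neg]
lemma w02 : θe * (γ 0 * γ 2) = -(γ 1 * γ 3) := by
  simp only [θe, mul_one, mul_assoc, gsq0, gsq1, gsq2, gsq3, gsq0', gsq1', gsq2', gsq3', gswap h10, gswap h20, gswap h30, gswap h21, gswap h31, gswap h32, gswap' h10, gswap' h20, gswap' h30, gswap' h21, gswap' h31, gswap' h32, mul_neg, neg_neg]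
lemma w03 : θe * (γ 0 * γ 3) = γ 1 * γ 2 := by
  simp only [θe, mul_one, mul_assoc, gsq0, gsq1, gsq2, gsq3, gsq0', gsq1', gsq2', gsq3', gswap h10, gswap h20, gswap h30, gswap h21, gswap h31, gswap h32, gswap' h10, gswap' h20, gswap' h30, gswap' h21, gswap' h31, gswap' h32, mul_neg, neg_neg]

lemma πk0_blade2 {a b : Fin 4} (h : a ≠ b) : πk 0 (γ a * γ b) = 0 :=
  πk_ne (eqE_blade2 h ▸ εE_mem2 a b) (by norm_num)

lemma πk4_blade2 {a b : Fin 4} (h : a ≠ b) : πk 4 (γ a * γ b) = 0 :=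
  πk_ne (eqE_blade2 h ▸ εE_mem2 a b) (by norm_num)

lemma T1a (a : Fin 4) : πk 4 (θe * βe * γ a) = θe * πk 0 (βe * γ a) := by
  rw [show βe = γ 0 from rfl]
  fin_cases a
  · show πk 4 (θe * γ 0 * γ 0) = θe * πk 0 (γ 0 * γ 0)
    rw [mul_assoc, gsq0, mul_one, πk4_theta, πk0_one, mul_one]
  · show πk 4 (θe * γ 0 * γ 1) = θe * πk 0 (γ 0 * γ 1)
    rw [mul_assoc, w01, πk4_blade2 (Ne.symm h32), πk0_blade2 (Ne.symm h10), mul_zero]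
  · show πk 4 (θe * γ 0 * γ 2) = θe * πk 0 (γ 0 * γ 2)
    rw [mul_assoc, w02, map_neg, πk4_blade2 (Ne.symm h31), πk0_blade2 (Ne.symm h20), mul_zero,
      neg_zero]
  · show πk 4 (θe * γ 0 * γ 3) = θe * πk 0 (γ 0 * γ 3)
    rw [mul_assoc, w03, πk4_blade2 (Ne.symm h21), πk0_blade2 (Ne.symm h30), mul_zero]

lemma T1 (v : Fin 4 → ℝ) :
    πk 4 (θe * βe * ι Qm v) = θe * πk 0 (βe * ι Qm v) := by
  have hv : v = ∑ a, v a • (Pi.single a 1 : Fin 4 → ℝ) := by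
    ext i; simp [Pi.single_apply]
  rw [hv, map_sum]
  simp only [map_smul, Finset.mul_sum, Finset.smul_sum, mul_smul_comm, map_sum]
  refine Finset.sum_congr rfl fun a _ => ?_
  rw [← γ, T1a]

lemma pd_comp (L : Cl →ₗ[ℝ] Cl) {F : (Fin 4 → ℝ) → Cl} {x : Fin 4 → ℝ}
    (hF : DifferentiableAt ℝ F x) (μ : Fin 4) :
    pd μ (fun y => L (F y)) x = L (pd μ F x) := by
  unfold pd
  have h' : HasFDerivAt (fun y => L (F y))
      ((LinearMap.toContinuousLinearMap L).comp (fderiv ℝ F x)) x :=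
    ((LinearMap.toContinuousLinearMap L).hasFDerivAt).comp x hF.hasFDerivAt
  rw [h'.fderiv]
  rfl

lemma Dzero (h : Fin 4 → (Fin 4 → ℝ) → Cl) (C : Fin 4 → (Fin 4 → ℝ) → Cl)
    (hg : IsGenvector h) (hCL : ∀ μ x, C μ x ∈ L3set)
    (hconsC : ∀ x, ∑ μ, pd μ (JCcurrent h μ) x
        - ∑ μ, (C μ x * JCcurrent h μ x - JCcurrent h μ x * C μ x) = 0)
    (x : Fin 4 → ℝ) : Dquantity h C x = 0 := by
  obtain ⟨hsm, hrange, -, hdiv⟩ := hg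
  have hdiff : ∀ μ, DifferentiableAt ℝ (h μ) x :=
    fun μ => ((hsm μ).differentiable (by simp)).differentiableAt
  have hscal : ∀ μ y, πk 4 (θe * βe * h μ y) = θe * πk 0 (βe * h μ y) := by
    intro μ y
    obtain ⟨v, hv⟩ := hrange μ y
    rw [← hv]
    exact T1 v
  set M1 : Cl →ₗ[ℝ] Cl := LinearMap.mulLeft ℝ (θe * βe) with hM1
  set L0 : Cl →ₗ[ℝ] Cl :=
    (LinearMap.mulLeft ℝ θe) ∘ₗ (πk 0) ∘ₗ (LinearMap.mulLeft ℝ βe) with hL0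
  have hL0app : ∀ u : Cl, L0 u = θe * πk 0 (βe * u) := fun u => rfl
  have hM1app : ∀ u : Cl, M1 u = θe * βe * u := fun u => rfl
  have hJCfun : ∀ μ, JCcurrent h μ = fun y => (M1 - L0) (h μ y) := by
    intro μ
    funext y
    rw [LinearMap.sub_apply, hM1app, hL0app, JCcurrent, hscal μ y]
  -- derivatives
  have hpdJC : ∀ μ, pd μ (JCcurrent h μ) x = (M1 - L0) (pd μ (h μ) x) := by
    intro μ
    rw [hJCfun μ]
    exact pd_comp _ (hdiff μ) μ
  have hpdM1 : ∀ μ, pd μ (fun y => θe * βe * h μ y) x = M1 (pd μ (h μ) x) := by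
    intro μ
    exact pd_comp M1 (hdiff μ) μ
  have hpddiv : ∀ μ, pd μ (fun y => πk 0 (βe * h μ y)) x
      = ((πk 0) ∘ₗ (LinearMap.mulLeft ℝ βe)) (pd μ (h μ) x) := by
    intro μ
    have e : (fun y => πk 0 (βe * h μ y))
        = fun y => ((πk 0) ∘ₗ (LinearMap.mulLeft ℝ βe)) (h μ y) := rfl
    rw [e]
    exact pd_comp _ (hdiff μ) μ
  have hdiv' : ∑ μ, ((πk 0) ∘ₗ (LinearMap.mulLeft ℝ βe)) (pd μ (h μ) x) = 0 := by
    rw [← Finset.sum_congr rfl fun μ _ => hpddiv μ]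
    exact hdiv x
  have hsumL0 : ∑ μ, L0 (pd μ (h μ) x) = 0 := by
    have : ∀ μ, L0 (pd μ (h μ) x)
        = θe * (((πk 0) ∘ₗ (LinearMap.mulLeft ℝ βe)) (pd μ (h μ) x)) := fun μ => rfl
    simp_rw [this, ← Finset.mul_sum, hdiv', mul_zero]
  -- commutators
  have hcomm : ∀ μ, C μ x * (θe * βe * h μ x) - (θe * βe * h μ x) * C μ x
      = C μ x * JCcurrent h μ x - JCcurrent h μ x * C μ x := by
    intro μ
    have ht : C μ x * (L0 (h μ x)) = (L0 (h μ x)) * C μ x := by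
      obtain ⟨r, hr⟩ := πk0_scalar (βe * h μ x)
      have h1 := even_theta (hCL μ x).1
      rw [hL0app, hr]
      calc C μ x * (θe * algebraMap ℝ Cl r)
          = (C μ x * θe) * algebraMap ℝ Cl r := (mul_assoc _ _ _).symm
        _ = (θe * C μ x) * algebraMap ℝ Cl r := by rw [h1]
        _ = θe * (C μ x * algebraMap ℝ Cl r) := mul_assoc _ _ _
        _ = θe * (algebraMap ℝ Cl r * C μ x) := by rw [Algebra.commutes]
        _ = θe * algebraMap ℝ Cl r * C μ x := (mul_assoc _ _ _).symm
    have ha : θe * βe * h μ x = JCcurrent h μ x + L0 (h μ x) := by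
      rw [JCcurrent, hL0app, hscal μ x, sub_add_cancel]
    rw [ha, mul_add, add_mul, ht]
    abel
  have hJCx : ∀ μ, JCcurrent h μ x = (M1 - L0) (h μ x) := fun μ => by rw [hJCfun μ]
  -- assemble
  unfold Dquantity
  calc ∑ μ, pd μ (fun y => θe * βe * h μ y) x
        - ∑ μ, (C μ x * (θe * βe * h μ x) - (θe * βe * h μ x) * C μ x)
      = (∑ μ, pd μ (JCcurrent h μ) x + ∑ μ, L0 (pd μ (h μ) x))
        - ∑ μ, (C μ x * JCcurrent h μ x - JCcurrent h μ x * C μ x) := by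
        rw [← Finset.sum_add_distrib]
        congr 1
        · refine Finset.sum_congr rfl fun μ _ => ?_
          rw [hpdJC μ, hpdM1 μ, LinearMap.sub_apply, sub_add_cancel]
        · exact Finset.sum_congr rfl fun μ _ => hcomm μ
    _ = 0 := by rw [hsumL0, add_zero, hconsC x]

end Aux

/-- Theorem 3: compatibility of the three covariant conservation laws
with the consequences of the Dirac-type equation for quarks. -/
theorem quark_conservation_laws_compatibility
    (Ψ : Fin 3 → (Fin 4 → ℝ) → CCl) (h : Fin 4 → (Fin 4 → ℝ) → Cl)
    (A : Fin 4 → (Fin 4 → ℝ) → CCl) (C : Fin 4 → (Fin 4 → ℝ) → Cl)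
    (b : Fin 4 → Fin 3 → Fin 3 → (Fin 4 → ℝ) → ℂ)
    (hΨs : ∀ l, SmoothF (Ψ l)) (hΨχ : ∀ l x, Ψ l x = Ψ l x * χe)
    (hg : IsGenvector h)
    (hAs : ∀ μ, SmoothF (A μ)) (hAL : ∀ μ x, A μ x ∈ LχSet)
    (hCs : ∀ μ, SmoothF (C μ)) (hCL : ∀ μ x, C μ x ∈ L3set)
    (hbs : ∀ μ k l, SmoothF (b μ k l))
    (hbanti : ∀ μ k l x, starRingEnd ℂ (b μ l k x) = -(b μ k l x))
    (hconsA : ∀ x, ∑ μ, pd μ (JAq Ψ h μ) x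
        - ∑ μ, (A μ x * JAq Ψ h μ x - JAq Ψ h μ x * A μ x) = 0)
    (hconsB : ∀ k l x, ∑ μ, pd μ (fun y => JBq Ψ h μ k l y) x
        - ∑ μ, ∑ i, (b μ k i x * JBq Ψ h μ i l x - JBq Ψ h μ k i x * b μ i l x) = 0)
    (hconsC : ∀ x, ∑ μ, pd μ (JCcurrent h μ) x
        - ∑ μ, (C μ x * JCcurrent h μ x - JCcurrent h μ x * C μ x) = 0) :
    (∀ x, (∑ μ, pd μ (JAq Ψ h μ) x
        - ∑ μ, (A μ x * JAq Ψ h μ x - JAq Ψ h μ x * A μ x))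
      + (3 : ℂ)⁻¹ • ∑ l, dagC (Ψ l x) * (Complex.I • θC) * ρc (Dquantity h C x) * Ψ l x
      = 0) ∧
    (∀ k l x, (∑ μ, pd μ (fun y => JBq Ψ h μ k l y) x
        - ∑ μ, ∑ i, (b μ k i x * JBq Ψ h μ i l x - JBq Ψ h μ k i x * b μ i l x))
      + TraceC (dagC (Ψ k x) * (Complex.I • θC) * ρc (Dquantity h C x) * Ψ l x)
      = 0) := by
  have hD : ∀ x, Dquantity h C x = 0 := Dzero h C hg hCL hconsC
  constructor
  · intro x
    rw [hconsA x]
    have hz : ∀ l : Fin 3,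
        dagC (Ψ l x) * (Complex.I • θC) * ρc (Dquantity h C x) * Ψ l x = 0 := by
      intro l
      rw [hD x, map_zero, mul_zero, zero_mul]
    rw [Finset.sum_congr rfl fun l _ => hz l]
    simp
  · intro k l x
    rw [hconsB k l x, hD x, map_zero, mul_zero, zero_mul, map_zero, add_zero]
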